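/- Let 0 < t < 1/√2 and ε = −1. Then the two points (√(1 − 2t²)/2, 0) and (−√(1 − 2t²)/2, 0) are critical points of F_{t,−1} that are neither local maxima nor local minima (saddle points). -/
import Mathlib


/-- The Karigiannis–Leung Chern–Simons type functional, evaluated on the
connections A = i(a₁η₁ + a₂η₂ + a₃η₃) on the trivial complex line bundle over a
compact 3-Sasakian 7-manifold with the coclosed G₂-structure φ_{t,ε}
(normalized so that Vol(X, g^{ts}) = 1), with x = a₃ and y² = a₁² + a₂²:
F_{t,ε}(x,y) = −[(x² + y²)(2(x² + y²) − 1) + 2t²(x² + εy²)]. -/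
def F (t ε : ℝ) : ℝ × ℝ → ℝ := fun p =>
  -((p.1 ^ 2 + p.2 ^ 2) * (2 * (p.1 ^ 2 + p.2 ^ 2) - 1) + 2 * t ^ 2 * (p.1 ^ 2 + ε * p.2 ^ 2))

lemma aux_saddle (t c : ℝ) (ht : 0 < t) (h1 : 2 * t ^ 2 < 1)
    (hc : c ^ 2 = (1 - 2 * t ^ 2) / 4) (hc0 : c ≠ 0) :
    fderiv ℝ (F t (-1)) ((c, 0) : ℝ × ℝ) = 0 ∧ ¬ IsLocalMax (F t (-1)) ((c, 0) : ℝ × ℝ) ∧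
      ¬ IsLocalMin (F t (-1)) ((c, 0) : ℝ × ℝ) := by
  refine ⟨?_, ?_, ?_⟩
  · have hFG : F t (-1) = fun p : ℝ × ℝ =>
        -((p.1 * p.1 + p.2 * p.2) * (2 * (p.1 * p.1 + p.2 * p.2) - 1)
          + 2 * t ^ 2 * (p.1 * p.1 + (-1) * (p.2 * p.2))) := by
      funext p; simp only [F]; ring
    have hfst : HasFDerivAt (Prod.fst : ℝ × ℝ → ℝ) (ContinuousLinearMap.fst ℝ ℝ ℝ)
        ((c, 0) : ℝ × ℝ) := hasFDerivAt_fst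
    have hsnd : HasFDerivAt (Prod.snd : ℝ × ℝ → ℝ) (ContinuousLinearMap.snd ℝ ℝ ℝ)
        ((c, 0) : ℝ × ℝ) := hasFDerivAt_snd
    have hx2 := hfst.mul hfst
    have hr := hx2.add (hsnd.mul hsnd)
    have hlin := (hr.const_mul (2:ℝ)).sub_const (1:ℝ)
    have hmul := hr.mul hlin
    have hlast := (hx2.add ((hsnd.mul hsnd).const_mul (-1:ℝ))).const_mul (2 * t ^ 2)
    have hchain := (hmul.add hlast).neg
    have hF : HasFDerivAt (𝕜 := ℝ) (F t (-1)) 0 ((c, 0) : ℝ × ℝ) := by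
      rw [hFG]
      refine hchain.congr_fderiv ?_
      refine ContinuousLinearMap.ext fun w => ?_
      simp
      linear_combination (-8 * c * w.1) * hc
    exact hF.fderiv
  · intro hmax
    have htend : Filter.Tendsto (fun v : ℝ => ((c, v) : ℝ × ℝ)) (nhds 0) (nhds ((c, 0) : ℝ × ℝ)) :=
      (Continuous.prodMk_right c).tendsto 0
    have hev : ∀ᶠ v in nhdsWithin (0:ℝ) {(0:ℝ)}ᶜ, F t (-1) (c, v) ≤ F t (-1) (c, 0) :=
      (htend.eventually hmax).filter_mono nhdsWithin_le_nhds
    have habs : ∀ᶠ v in nhdsWithin (0:ℝ) {(0:ℝ)}ᶜ, |v - 0| < t :=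
      (eventually_abs_sub_lt 0 ht).filter_mono nhdsWithin_le_nhds
    have hlt : ∀ᶠ v in nhdsWithin (0:ℝ) {(0:ℝ)}ᶜ, F t (-1) (c, 0) < F t (-1) (c, v) := by
      filter_upwards [habs, self_mem_nhdsWithin] with v hv hv0
      have hv0' : v ≠ 0 := hv0
      have hv2 : v ^ 2 < t ^ 2 := by
        rw [sub_zero] at hv
        nlinarith [abs_nonneg v, sq_abs v]
      have hvpos : 0 < v ^ 2 := by positivity
      have key : F t (-1) (c, v) - F t (-1) (c, 0) = v ^ 2 * (4 * t ^ 2 - 2 * v ^ 2) := by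
        simp only [F]
        linear_combination (-4 * v ^ 2) * hc
      nlinarith [key]
    obtain ⟨v, h₁, h₂⟩ := (hev.and hlt).exists
    linarith
  · intro hmin
    have htend : Filter.Tendsto (fun u : ℝ => ((u, 0) : ℝ × ℝ)) (nhds c) (nhds ((c, 0) : ℝ × ℝ)) :=
      (continuous_id.prodMk continuous_const).tendsto c
    have hev : ∀ᶠ u in nhdsWithin c {c}ᶜ, F t (-1) (c, 0) ≤ F t (-1) (u, 0) :=
      (htend.eventually hmin).filter_mono nhdsWithin_le_nhds
    have habs : ∀ᶠ u in nhdsWithin c {c}ᶜ, |u - c| < |c| :=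
      (eventually_abs_sub_lt c (abs_pos.mpr hc0)).filter_mono nhdsWithin_le_nhds
    have hlt : ∀ᶠ u in nhdsWithin c {c}ᶜ, F t (-1) (u, 0) < F t (-1) (c, 0) := by
      filter_upwards [habs, self_mem_nhdsWithin] with u hv hu0
      have hu0' : u ≠ c := hu0
      have hune : u ≠ -c := by
        intro h
        rw [h] at hv
        have h2 : |(-c) - c| = 2 * |c| := by
          rw [show (-c) - c = -(2 * c) by ring, abs_neg, abs_mul]
          norm_num
        have h3 : 0 < |c| := abs_pos.mpr hc0
        rw [h2] at hv
        linarith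
      have hsq : u ^ 2 ≠ c ^ 2 := by
        intro h
        have hfac : (u - c) * (u + c) = 0 := by linear_combination h
        rcases mul_eq_zero.mp hfac with h' | h'
        · exact hu0' (by linarith)
        · exact hune (by linarith)
      have key : F t (-1) (u, 0) - F t (-1) (c, 0) = -(2 * (u ^ 2 - c ^ 2) ^ 2) := by
        simp only [F]
        linear_combination (-4 * (u ^ 2 - c ^ 2)) * hc
      have hpos : 0 < 2 * (u ^ 2 - c ^ 2) ^ 2 := by
        have : u ^ 2 - c ^ 2 ≠ 0 := sub_ne_zero.mpr hsq
        positivity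
      linarith
    obtain ⟨u, h₁, h₂⟩ := (hev.and hlt).exists
    linarith

/-- For 0 < t < 1/√2, the two points (±√(1 − 2t²)/2, 0) (corresponding to the
two isolated non-trivial deformed G₂-instantons for φ_{t,−1}) are critical
points of F_{t,−1} which are neither local maxima nor local minima. -/
theorem stmt_17 (t : ℝ) (ht : 0 < t) (ht' : t < 1 / Real.sqrt 2) :
    ∀ p : ℝ × ℝ,
      (p = (Real.sqrt (1 - 2 * t ^ 2) / 2, 0) ∨ p = (-(Real.sqrt (1 - 2 * t ^ 2) / 2), 0)) →
      fderiv ℝ (F t (-1)) p = 0 ∧ ¬ IsLocalMax (F t (-1)) p ∧ ¬ IsLocalMin (F t (-1)) p := by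
  have hs2 : (0:ℝ) < Real.sqrt 2 := Real.sqrt_pos.mpr (by norm_num)
  have ht2 : t * Real.sqrt 2 < 1 := by
    rw [one_div] at ht'
    calc t * Real.sqrt 2 < (Real.sqrt 2)⁻¹ * Real.sqrt 2 := by
          exact mul_lt_mul_of_pos_right ht' hs2
      _ = 1 := inv_mul_cancel₀ hs2.ne'
  have h1 : 2 * t ^ 2 < 1 := by
    nlinarith [Real.sq_sqrt (by norm_num : (0:ℝ) ≤ 2)]
  have hpos : 0 < 1 - 2 * t ^ 2 := by linarith
  set s := Real.sqrt (1 - 2 * t ^ 2) with hs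
  have hsne : s ≠ 0 := (Real.sqrt_pos.mpr hpos).ne'
  have hc : (s / 2) ^ 2 = (1 - 2 * t ^ 2) / 4 := by
    rw [div_pow, Real.sq_sqrt hpos.le]; norm_num
  rintro p (rfl | rfl)
  · exact aux_saddle t (s / 2) ht h1 hc (by positivity)
  · have hc' : (-(s / 2)) ^ 2 = (1 - 2 * t ^ 2) / 4 := by rw [neg_pow]; simpa using hc
    exact aux_saddle t (-(s / 2)) ht h1 hc' (by simp [hsne])
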